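/- Let n ≥ 2 be even and let ρ = |W_n⟩⟨W_n| be the W-state projector. Then for every ε with 0 ≤ ε < 4/n², the cumulative distribution function vanishes: F_ρ(ε) = 0. Equivalently, every Pauli string a with ⟨P_a⟩_ρ² ≤ ε < 4/n² satisfies ⟨P_a⟩_ρ = 0. -/

import Mathlib

/-!
Writing `e_j` for the bit string with a single one at `j`,
`n ⟨P_a⟩ = Re ∑_{j,k} (P_a) e_j e_k`. An entry `(P_a) z z'` vanishes unless `z` and `z'` differ
exactly at the qubits where `a` is a bit flip (`σ₁` or `σ₂`). If `a` has no bit flip, only the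
diagonal terms `±1` survive and `n ⟨P_a⟩ = n - 2 #{i | a i = 3}`; if its bit flips sit at exactly
two qubits `j ≠ k`, only the terms `(j, k)` and `(k, j)` survive and `n ⟨P_a⟩ ∈ {0, 2}`;
otherwise `⟨P_a⟩ = 0`. So for even `n` the number `n ⟨P_a⟩` is an even integer, and `⟨P_a⟩ ≠ 0`
forces `⟨P_a⟩² ≥ 4 / n²`.
-/

open Matrix Kronecker
open scoped ComplexOrder

noncomputable def pauli1 : Fin 4 → Matrix (Fin 2) (Fin 2) ℂ
  | 0 => !![1, 0; 0, 1]
  | 1 => !![0, 1; 1, 0]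
  | 2 => !![0, -Complex.I; Complex.I, 0]
  | 3 => !![1, 0; 0, -1]

noncomputable def PauliOp {n : ℕ} (a : Fin n → Fin 4) :
    Matrix (Fin n → Fin 2) (Fin n → Fin 2) ℂ :=
  Matrix.of fun z z' => ∏ i, pauli1 (a i) (z i) (z' i)

/-- The trace norm of a matrix: the trace of the positive semidefinite square root of `Aᴴ * A`. -/
noncomputable def traceNorm {m : Type*} [Fintype m] [DecidableEq m]
    (A : Matrix m m ℂ) : ℝ :=
  (((Matrix.posSemidef_conjTranspose_mul_self A).1.eigenvectorUnitary : Matrix m m ℂ) *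
    Matrix.diagonal ((fun x : ℝ => (x : ℂ)) ∘ (Real.sqrt ·) ∘ (Matrix.posSemidef_conjTranspose_mul_self A).1.eigenvalues) *
    (star (Matrix.posSemidef_conjTranspose_mul_self A).1.eigenvectorUnitary : Matrix m m ℂ)).trace.re

/-- A quantum state: positive semidefinite with unit trace. -/
structure IsState {m : Type*} [Fintype m] (ρ : Matrix m m ℂ) : Prop where
  posSemidef : ρ.PosSemidef
  trace_one : ρ.trace = 1

/-- Pauli expectation value `⟨P_a⟩_ρ`. -/
noncomputable def pExp {n : ℕ} (ρ : Matrix (Fin n → Fin 2) (Fin n → Fin 2) ℂ)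
    (a : Fin n → Fin 4) : ℝ := ((PauliOp a * ρ).trace).re

/-- The purity `tr ρ²`. -/
noncomputable def purity {m : Type*} [Fintype m] (ρ : Matrix m m ℂ) : ℝ :=
  ((ρ * ρ).trace).re

/-- The Pauli distribution `p_ρ`. -/
noncomputable def pDist {n : ℕ} (ρ : Matrix (Fin n → Fin 2) (Fin n → Fin 2) ℂ)
    (a : Fin n → Fin 4) : ℝ := (pExp ρ a) ^ 2 / (2 ^ n * purity ρ)

/-- The cumulative distribution function `F_ρ`. -/
noncomputable def cdf {n : ℕ} (ρ : Matrix (Fin n → Fin 2) (Fin n → Fin 2) ℂ)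
    (ε : ℝ) : ℝ := ∑ a : Fin n → Fin 4, if (pExp ρ a) ^ 2 ≤ ε then pDist ρ a else 0

/-- The maximally entangled state `|Φ₀⟩`. -/
noncomputable def Phi0 (n : ℕ) : (Fin n → Fin 2) × (Fin n → Fin 2) → ℂ :=
  fun p => if p.1 = p.2 then (↑(Real.sqrt (2 ^ n)))⁻¹ else 0

/-- The Bell state `|Φ_a⟩ = (1 ⊗ P_a)|Φ₀⟩`. -/
noncomputable def BellVec {n : ℕ} (a : Fin n → Fin 4) :
    (Fin n → Fin 2) × (Fin n → Fin 2) → ℂ :=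
  ((1 : Matrix (Fin n → Fin 2) (Fin n → Fin 2) ℂ) ⊗ₖ PauliOp a).mulVec (Phi0 n)

/-- The Bell distribution `q_ρ(a) = ⟨Φ_a| ρ ⊗ ρ |Φ_a⟩`. -/
noncomputable def qDist {n : ℕ} (ρ : Matrix (Fin n → Fin 2) (Fin n → Fin 2) ℂ)
    (a : Fin n → Fin 4) : ℝ :=
  (star (BellVec a) ⬝ᵥ ((ρ ⊗ₖ ρ).mulVec (BellVec a))).re

/-- The W state. -/
noncomputable def Wstate (n : ℕ) : (Fin n → Fin 2) → ℂ :=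
  fun z => if (∑ i, (z i : ℕ)) = 1 then (↑(Real.sqrt n))⁻¹ else 0

/-- The W state projector `|W_n⟩⟨W_n|`. -/
noncomputable def Wproj (n : ℕ) : Matrix (Fin n → Fin 2) (Fin n → Fin 2) ℂ :=
  Matrix.vecMulVec (Wstate n) (star (Wstate n))

open Finset

def IsBitFlip (t : Fin 4) : Prop := t = 1 ∨ t = 2

lemma pauli1_eq_zero_iff (t : Fin 4) (x y : Fin 2) :
    pauli1 t x y = 0 ↔ (x = y ↔ IsBitFlip t) := by
  fin_cases t <;> fin_cases x <;> fin_cases y <;> simp [pauli1, IsBitFlip]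

lemma pauli1_zero_zero {t : Fin 4} (ht : ¬IsBitFlip t) : pauli1 t 0 0 = 1 := by
  fin_cases t <;> simp_all [pauli1, IsBitFlip]

lemma pauli1_one_one {t : Fin 4} (ht : ¬IsBitFlip t) :
    pauli1 t 1 1 = 1 - 2 * if t = 3 then 1 else 0 := by
  fin_cases t <;> simp_all [pauli1, IsBitFlip]; norm_num

lemma re_pauli1_mul_add_mul {s t : Fin 4} (hs : IsBitFlip s) (ht : IsBitFlip t) :
    (pauli1 s 1 0 * pauli1 t 0 1 + pauli1 s 0 1 * pauli1 t 1 0).re = 0 ∨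
      (pauli1 s 1 0 * pauli1 t 0 1 + pauli1 s 0 1 * pauli1 t 1 0).re = 2 := by
  rcases hs with rfl | rfl <;> rcases ht with rfl | rfl <;> norm_num [pauli1]

lemma pauliOp_apply_ne_zero_iff {n : ℕ} (a : Fin n → Fin 4) (z z' : Fin n → Fin 2) :
    PauliOp a z z' ≠ 0 ↔ ∀ i, (z i ≠ z' i ↔ IsBitFlip (a i)) := by
  simp only [PauliOp, of_apply, ne_eq, prod_eq_zero_iff, mem_univ, true_and, not_exists,
    pauli1_eq_zero_iff]
  grind

lemma pauliOp_apply_eq_prod {n : ℕ} (a : Fin n → Fin 4) (z z' : Fin n → Fin 2)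
    (s : Finset (Fin n)) (h : ∀ i ∉ s, z i = 0 ∧ z' i = 0 ∧ ¬IsBitFlip (a i)) :
    PauliOp a z z' = ∏ i ∈ s, pauli1 (a i) (z i) (z' i) := by
  refine (prod_subset (subset_univ s) fun i _ hi => ?_).symm
  obtain ⟨hz, hz', ha⟩ := h i hi
  rw [hz, hz', pauli1_zero_zero ha]

lemma exists_eq_single_of_sum_val_eq_one {n : ℕ} {z : Fin n → Fin 2}
    (h : ∑ i, (z i : ℕ) = 1) : ∃ j, z = Pi.single j 1 := by
  obtain ⟨j, -, hj⟩ : ∃ j ∈ univ, (z j : ℕ) ≠ 0 := by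
    by_contra! h0
    rw [sum_eq_zero h0] at h
    exact zero_ne_one h
  refine ⟨j, funext fun i => ?_⟩
  by_cases hij : i = j
  · subst hij; simp only [Pi.single_eq_same]; omega
  · have := add_le_sum (f := fun i => (z i : ℕ)) (fun _ _ => Nat.zero_le _)
      (mem_univ i) (mem_univ j) hij
    simp only [Pi.single_eq_of_ne hij]; omega

lemma wstate_single {n : ℕ} (j : Fin n) :
    Wstate n (Pi.single j 1) = (Real.sqrt n : ℂ)⁻¹ := by
  have : ∑ i, ((Pi.single j 1 : Fin n → Fin 2) i : ℕ) = 1 := by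
    rw [sum_eq_single j (fun i _ hij => by simp [Pi.single_eq_of_ne hij]) (by simp)]
    simp
  simp [Wstate, this]

lemma sum_wstate_mul {n : ℕ} (g : (Fin n → Fin 2) → ℂ) :
    ∑ z, Wstate n z * g z = (Real.sqrt n : ℂ)⁻¹ * ∑ j, g (Pi.single j 1) := by
  rw [mul_sum]
  refine (Fintype.sum_of_injective (fun j => (Pi.single j 1 : Fin n → Fin 2))
    (fun j k h => by simpa [Pi.single_apply] using congrFun h j) _ _ (fun z hz => ?_)
    (fun j => by rw [wstate_single])).symm
  suffices Wstate n z = 0 by rw [this, zero_mul]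
  refine if_neg fun h => hz ?_
  obtain ⟨j, rfl⟩ := exists_eq_single_of_sum_val_eq_one h
  exact ⟨j, rfl⟩

lemma star_wstate (n : ℕ) : star (Wstate n) = Wstate n := by
  funext z
  simp only [Pi.star_apply, Wstate]
  split_ifs <;> simp

lemma pExp_wproj {n : ℕ} (a : Fin n → Fin 4) :
    pExp (Wproj n) a
      = (∑ j, ∑ k, PauliOp a (Pi.single j 1) (Pi.single k 1)).re / n := by
  have hsq : (Real.sqrt n : ℂ)⁻¹ * (Real.sqrt n : ℂ)⁻¹ = ((n : ℝ) : ℂ)⁻¹ := by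
    rw [← mul_inv, ← Complex.ofReal_mul, Real.mul_self_sqrt (Nat.cast_nonneg n)]
  have htr : (PauliOp a * Wproj n).trace
      = ∑ z, Wstate n z * ∑ z', Wstate n z' * PauliOp a z z' := by
    rw [Wproj, star_wstate, mul_vecMulVec, trace_vecMulVec, dotProduct_comm]
    simp only [dotProduct, mulVec, mul_comm (Wstate n _)]
  rw [pExp, htr, sum_wstate_mul]
  simp only [sum_wstate_mul, ← mul_sum, ← mul_assoc, hsq]
  rw [← Complex.ofReal_inv, Complex.re_ofReal_mul, div_eq_inv_mul]

section WeightOne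

variable {n : ℕ} (a : Fin n → Fin 4)

lemma single_apply_ne_single_apply_iff (i j k : Fin n) :
    (Pi.single j 1 : Fin n → Fin 2) i ≠ (Pi.single k 1 : Fin n → Fin 2) i
      ↔ j ≠ k ∧ (i = j ∨ i = k) := by
  simp only [Pi.single_apply]
  split_ifs <;> simp_all [eq_comm]

lemma pauliOp_single_single_ne_zero_iff (j k : Fin n) :
    PauliOp a (Pi.single j 1) (Pi.single k 1) ≠ 0
      ↔ ∀ i, (j ≠ k ∧ (i = j ∨ i = k) ↔ IsBitFlip (a i)) := by
  simp only [pauliOp_apply_ne_zero_iff, single_apply_ne_single_apply_iff]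

lemma pauliOp_single_single_eq_prod (j k : Fin n)
    (h : ∀ i, i ≠ j → i ≠ k → ¬IsBitFlip (a i)) :
    PauliOp a (Pi.single j 1) (Pi.single k 1) = ∏ i ∈ {j, k},
      pauli1 (a i) ((Pi.single j 1 : Fin n → Fin 2) i) ((Pi.single k 1 : Fin n → Fin 2) i) := by
  refine pauliOp_apply_eq_prod a _ _ _ fun i hi => ?_
  simp only [mem_insert, mem_singleton, not_or] at hi
  simp [Pi.single_eq_of_ne hi.1, Pi.single_eq_of_ne hi.2, h i hi.1 hi.2]

lemma sum_pauliOp_single_of_forall_not_isBitFlip (h : ∀ i, ¬IsBitFlip (a i)) :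
    ∑ j, ∑ k, PauliOp a (Pi.single j 1) (Pi.single k 1) = n - 2 * #{i | a i = 3} := by
  have hdiag : ∀ j, ∑ k, PauliOp a (Pi.single j 1) (Pi.single k 1)
      = 1 - 2 * if a j = 3 then 1 else 0 := by
    intro j
    rw [Fintype.sum_eq_single j fun k hkj => ?_, pauliOp_single_single_eq_prod a j j
      (fun i _ _ => h i), insert_eq_self.mpr (mem_singleton_self j), prod_singleton,
      Pi.single_eq_same, pauli1_one_one (h j)]
    by_contra hne
    exact h j (((pauliOp_single_single_ne_zero_iff a j k).mp hne j).mp ⟨Ne.symm hkj, .inl rfl⟩)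
  simp only [hdiag, sum_sub_distrib, ← mul_sum, sum_boole]
  simp

lemma re_sum_pauliOp_single_of_isBitFlip_iff {j k : Fin n} (hjk : j ≠ k)
    (h : ∀ i, IsBitFlip (a i) ↔ i = j ∨ i = k) :
    (∑ j, ∑ k, PauliOp a (Pi.single j 1) (Pi.single k 1)).re = 0 ∨
      (∑ j, ∑ k, PauliOp a (Pi.single j 1) (Pi.single k 1)).re = 2 := by
  have hout : ∀ i, i ≠ j → i ≠ k → ¬IsBitFlip (a i) := fun i hij hik hi => by
    rcases (h i).mp hi with rfl | rfl <;> contradiction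
  have hsum : ∑ j, ∑ k, PauliOp a (Pi.single j 1) (Pi.single k 1)
      = PauliOp a (Pi.single j 1) (Pi.single k 1)
        + PauliOp a (Pi.single k 1) (Pi.single j 1) := by
    rw [← Fintype.sum_prod_type', Fintype.sum_eq_add (j, k) (k, j) (by simp [hjk])]
    rintro ⟨j', k'⟩ hne
    by_contra hP
    have hsupp := (pauliOp_single_single_ne_zero_iff a j' k').mp hP
    obtain ⟨-, hj⟩ := (hsupp j).mpr ((h j).mpr (.inl rfl))
    obtain ⟨-, hk⟩ := (hsupp k).mpr ((h k).mpr (.inr rfl))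
    rcases hj with rfl | rfl <;> rcases hk with rfl | rfl <;> simp_all
  rw [hsum, pauliOp_single_single_eq_prod a j k hout,
    pauliOp_single_single_eq_prod a k j fun i hik hij => hout i hij hik,
    pair_comm k j, prod_pair hjk, prod_pair hjk]
  simp only [Pi.single_eq_same, Pi.single_eq_of_ne hjk, Pi.single_eq_of_ne hjk.symm]
  exact re_pauli1_mul_add_mul ((h j).mpr (.inl rfl)) ((h k).mpr (.inr rfl))

lemma re_sum_pauliOp_single_of_exists_isBitFlip (h : ∃ i, IsBitFlip (a i)) :
    (∑ j, ∑ k, PauliOp a (Pi.single j 1) (Pi.single k 1)).re = 0 ∨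
      (∑ j, ∑ k, PauliOp a (Pi.single j 1) (Pi.single k 1)).re = 2 := by
  by_cases hpair : ∃ j k, j ≠ k ∧ ∀ i, IsBitFlip (a i) ↔ i = j ∨ i = k
  · obtain ⟨j, k, hjk, hflip⟩ := hpair
    exact re_sum_pauliOp_single_of_isBitFlip_iff a hjk hflip
  · left
    rw [sum_eq_zero fun j _ => sum_eq_zero fun k _ => ?_, Complex.zero_re]
    by_contra hP
    have hsupp := (pauliOp_single_single_ne_zero_iff a j k).mp hP
    obtain ⟨i, hi⟩ := h
    have hjk : j ≠ k := ((hsupp i).mpr hi).1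
    exact hpair ⟨j, k, hjk, fun i => by rw [← hsupp i]; simp [hjk]⟩

lemma exists_re_sum_pauliOp_single_eq_two_mul (hn : Even n) :
    ∃ m : ℤ, (∑ j, ∑ k, PauliOp a (Pi.single j 1) (Pi.single k 1)).re = 2 * m := by
  by_cases h : ∃ i, IsBitFlip (a i)
  · rcases re_sum_pauliOp_single_of_exists_isBitFlip a h with h0 | h2
    · exact ⟨0, by simp [h0]⟩
    · exact ⟨1, by simp [h2]⟩
  · push Not at h
    obtain ⟨r, rfl⟩ := hn
    refine ⟨r - #{i | a i = 3}, ?_⟩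
    rw [sum_pauliOp_single_of_forall_not_isBitFlip a h]
    simp
    ring

end WeightOne

lemma pExp_wproj_eq_zero_of_sq_lt {n : ℕ} (hn : Even n) (a : Fin n → Fin 4)
    (h : pExp (Wproj n) a ^ 2 < 4 / n ^ 2) : pExp (Wproj n) a = 0 := by
  obtain ⟨m, hm⟩ := exists_re_sum_pauliOp_single_eq_two_mul a hn
  rw [pExp_wproj, hm] at h ⊢
  rcases eq_or_ne m 0 with rfl | hm0
  · simp
  have hm1 : (1 : ℝ) ≤ (m : ℝ) ^ 2 := by
    exact_mod_cast (one_le_sq_iff_one_le_abs m).mpr (Int.one_le_abs hm0)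
  have : 4 / (n : ℝ) ^ 2 ≤ (2 * m / n) ^ 2 := by
    rw [div_pow, mul_pow]
    gcongr
    nlinarith
  linarith

lemma cdf_eq_zero_of_forall_pExp_eq_zero {n : ℕ} {ρ : Matrix (Fin n → Fin 2) (Fin n → Fin 2) ℂ}
    {ε : ℝ}
    (h : ∀ a, pExp ρ a ^ 2 ≤ ε → pExp ρ a = 0) : cdf ρ ε = 0 := by
  refine sum_eq_zero fun a _ => ?_
  split_ifs with ha
  · rw [pDist, h a ha, zero_pow two_ne_zero, zero_div]
  · rfl

theorem stmt_8_general {n : ℕ} (hne : Even n) :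
    ∀ ε : ℝ, 0 ≤ ε → ε < 4 / (n : ℝ) ^ 2 →
      cdf (Wproj n) ε = 0 ∧
      ∀ a : Fin n → Fin 4, (pExp (Wproj n) a) ^ 2 ≤ ε → pExp (Wproj n) a = 0 := by
  intro ε _ hε
  have hzero : ∀ a, pExp (Wproj n) a ^ 2 ≤ ε → pExp (Wproj n) a = 0 :=
    fun a ha => pExp_wproj_eq_zero_of_sq_lt hne a (ha.trans_lt hε)
  exact ⟨cdf_eq_zero_of_forall_pExp_eq_zero hzero, hzero⟩

/-- For `ρ = |W_n⟩⟨W_n|` and `0 ≤ ε < 4/n²`, the CDF vanishes,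
`F_ρ(ε) = 0`; equivalently every Pauli string `a` with `⟨P_a⟩_ρ² ≤ ε`
satisfies `⟨P_a⟩_ρ = 0`. -/
theorem stmt_8 {n : ℕ} (hn : 2 ≤ n) (hne : Even n) :
    ∀ ε : ℝ, 0 ≤ ε → ε < 4 / (n : ℝ) ^ 2 →
      cdf (Wproj n) ε = 0 ∧
      ∀ a : Fin n → Fin 4, (pExp (Wproj n) a) ^ 2 ≤ ε → pExp (Wproj n) a = 0 :=
  stmt_8_general hne
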